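/- Pointwise estimate for the difference of convolution derivatives: with $V, U$ as above built from $\rho, \sigma : \mathbb{R} \to I$ with $\rho - \sigma \in L^1$, for a.e. $x$: $|U_x(x) - V_x(x)| \leq \|w_\eta'\|_\infty \|v'\|_\infty \|\rho-\sigma\|_{L^1} + w_\eta(0)\|v'\|_\infty (|\rho-\sigma|(x+\eta) + |\rho-\sigma|(x))$. -/

import Mathlib

/-!
With `G t = ∫ u in 0..t, g u`, which is Lipschitz since `g` is bounded, integration by parts gives
`∫ y in x..x + η, g y * w (y - x) = w η * G (x + η) - w 0 * G x - ∫ s in 0..η, w' s * G (x + s)`.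
By dominated differentiation (again using that `G` is Lipschitz) the last integral has derivative
`∫ s in 0..η, w' s * g (x + s)` at every `x`, while `G' = g` almost everywhere by the Lebesgue
differentiation theorem. Applied to `g = v ∘ ρ` and `g = v ∘ σ` this yields `V'` and `U'` almost
everywhere; their difference is bounded termwise using `|v σ - v ρ| ≤ ‖v'‖∞ |ρ - σ|`,
`0 ≤ w η ≤ w 0` and `∫ y in x..x + η, |ρ - σ| ≤ ‖ρ - σ‖_{L¹}`.
-/

open MeasureTheory

noncomputable def supAbs (f : ℝ → ℝ) (s : Set ℝ) : ℝ :=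
  sSup ((fun x => |f x|) '' s)

open Set Filter intervalIntegral
open scoped NNReal Interval

theorem MeasureTheory.LocallyIntegrable.intervalIntegrable {g : ℝ → ℝ}
    (hg : LocallyIntegrable g) (a b : ℝ) : IntervalIntegrable g volume a b :=
  (hg.integrableOn_isCompact isCompact_uIcc).intervalIntegrable

theorem lipschitzWith_primitive {g : ℝ → ℝ} {C : ℝ≥0} (hg : LocallyIntegrable g)
    (hC : ∀ y, ‖g y‖ ≤ C) (a : ℝ) : LipschitzWith C fun t => ∫ u in a..t, g u := by
  refine LipschitzWith.of_dist_le_mul fun s t => ?_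
  rw [dist_eq_norm, integral_interval_sub_left (hg.intervalIntegrable _ _)
    (hg.intervalIntegrable _ _), Real.dist_eq]
  exact norm_integral_le_of_norm_le_const fun y _ => hC y

/-- The a.e. derivative of the look-ahead average `x ↦ ∫ y in x..x + η, g y * w (y - x)`. -/
noncomputable def lookAheadDeriv (w : ℝ → ℝ) (η : ℝ) (g : ℝ → ℝ) (x : ℝ) : ℝ :=
  w η * g (x + η) - w 0 * g x - ∫ s in 0..η, deriv w s * g (x + s)

section LookAhead

variable {g g₁ g₂ w : ℝ → ℝ} {η : ℝ} {C : ℝ≥0}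

theorem integral_mul_comp_sub_eq (hg : LocallyIntegrable g) (hC : ∀ y, ‖g y‖ ≤ C)
    (hw : ContDiffOn ℝ 1 w (Icc 0 η)) (hη : 0 ≤ η) (x : ℝ) :
    ∫ y in x..x + η, g y * w (y - x) =
      w η * (∫ u in 0..x + η, g u) - w 0 * (∫ u in 0..x, g u)
        - ∫ s in 0..η, deriv w s * ∫ u in 0..x + s, g u := by
  set G := fun t => ∫ u in 0..t, g u
  have hwx : AbsolutelyContinuousOnInterval (fun y => w (y - x)) x (x + η) := by
    refine ContDiffOn.absolutelyContinuousOnInterval (hw.comp (by fun_prop) fun y hy => ?_)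
    rw [uIcc_of_le (by linarith)] at hy
    constructor <;> linarith [hy.1, hy.2]
  have hG : AbsolutelyContinuousOnInterval G x (x + η) :=
    ((lipschitzWith_primitive hg hC 0).lipschitzOnWith).absolutelyContinuousOnInterval
  have hderivG : ∀ᵐ y, y ∈ Ι x (x + η) → w (y - x) * deriv G y = g y * w (y - x) := by
    filter_upwards [LocallyIntegrable.ae_hasDerivAt_integral hg] with y hy _
    rw [(hy 0).deriv, mul_comm]
  rw [← integral_congr_ae hderivG, hwx.integral_mul_deriv_eq_deriv_mul hG]
  simp only [deriv_comp_sub_const, add_sub_cancel_left, sub_self]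
  congr 1
  simpa using (integral_comp_add_left (a := 0) (b := η) (fun y => deriv w (y - x) * G y) x).symm

theorem hasDerivAt_integral_deriv_mul_primitive (hg : LocallyIntegrable g)
    (hC : ∀ y, ‖g y‖ ≤ C) (hw : ContDiffOn ℝ 1 w (Icc 0 η)) (hη : 0 ≤ η) (x : ℝ) :
    IntervalIntegrable (fun s => deriv w s * g (x + s)) volume 0 η ∧
      HasDerivAt (fun x => ∫ s in 0..η, deriv w s * ∫ u in 0..x + s, g u)
        (∫ s in 0..η, deriv w s * g (x + s)) x := by
  have hw' : IntervalIntegrable (deriv w) volume 0 η :=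
    (uIcc_of_le hη ▸ hw).absolutelyContinuousOnInterval.intervalIntegrable_deriv
  have hG := lipschitzWith_primitive hg hC 0
  refine hasDerivAt_integral_of_dominated_loc_of_lip (bound := fun s => |deriv w s| * C)
    univ_mem (Eventually.of_forall fun x' => ?_) ?_ ?_ (ae_of_all _ fun s _ => ?_)
    (hw'.abs.mul_const _) ?_
  · exact (measurable_deriv w).aestronglyMeasurable.mul
      (hG.continuous.comp (continuous_const_add _)).aestronglyMeasurable
  · exact hw'.mul_continuousOn (hG.continuous.comp (continuous_const_add _)).continuousOn
  · exact (measurable_deriv w).aestronglyMeasurable.mul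
      (hg.aestronglyMeasurable.comp_quasiMeasurePreserving
        (measurePreserving_add_left volume x).quasiMeasurePreserving).restrict
  · refine LipschitzOnWith.of_dist_le_mul fun y _ z _ => ?_
    rw [Real.coe_nnabs, abs_of_nonneg (by positivity), Real.dist_eq, ← mul_sub, abs_mul,
      mul_assoc]
    gcongr
    simpa [Real.dist_eq] using hG.dist_le_mul (y + s) (z + s)
  · filter_upwards [(measurePreserving_add_left volume x).quasiMeasurePreserving.ae
      (LocallyIntegrable.ae_hasDerivAt_integral hg)] with s hs _
    exact ((hs 0).comp_add_const x s).const_mul _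

theorem ae_hasDerivAt_integral_mul_comp_sub (hg : LocallyIntegrable g) (hC : ∀ y, ‖g y‖ ≤ C)
    (hw : ContDiffOn ℝ 1 w (Icc 0 η)) (hη : 0 ≤ η) :
    ∀ᵐ x, HasDerivAt (fun x => ∫ y in x..x + η, g y * w (y - x)) (lookAheadDeriv w η g x) x := by
  have hG := LocallyIntegrable.ae_hasDerivAt_integral hg
  filter_upwards [hG, (measurePreserving_add_right volume η).quasiMeasurePreserving.ae hG]
    with x hx hxη
  rw [funext (integral_mul_comp_sub_eq hg hC hw hη)]
  exact (((hxη 0).comp_add_const x η).const_mul (w η)).sub ((hx 0).const_mul (w 0)) |>.sub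
    (hasDerivAt_integral_deriv_mul_primitive hg hC hw hη x).2

theorem lookAheadDeriv_sub {x : ℝ}
    (h₁ : IntervalIntegrable (fun s => deriv w s * g₁ (x + s)) volume 0 η)
    (h₂ : IntervalIntegrable (fun s => deriv w s * g₂ (x + s)) volume 0 η) :
    lookAheadDeriv w η g₁ x - lookAheadDeriv w η g₂ x = lookAheadDeriv w η (g₁ - g₂) x := by
  simp only [lookAheadDeriv, Pi.sub_apply, mul_sub, integral_sub h₁ h₂]
  ring

theorem ae_deriv_sub_eq_lookAheadDeriv_sub (hg₁ : LocallyIntegrable g₁) (hC₁ : ∀ y, ‖g₁ y‖ ≤ C)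
    (hg₂ : LocallyIntegrable g₂) (hC₂ : ∀ y, ‖g₂ y‖ ≤ C) (hw : ContDiffOn ℝ 1 w (Icc 0 η))
    (hη : 0 ≤ η) :
    ∀ᵐ x, deriv (fun x => ∫ y in x..x + η, g₁ y * w (y - x)) x
      - deriv (fun x => ∫ y in x..x + η, g₂ y * w (y - x)) x = lookAheadDeriv w η (g₁ - g₂) x := by
  filter_upwards [ae_hasDerivAt_integral_mul_comp_sub hg₁ hC₁ hw hη,
    ae_hasDerivAt_integral_mul_comp_sub hg₂ hC₂ hw hη] with x h₁ h₂
  rw [h₁.deriv, h₂.deriv, lookAheadDeriv_sub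
    (hasDerivAt_integral_deriv_mul_primitive hg₁ hC₁ hw hη x).1
    (hasDerivAt_integral_deriv_mul_primitive hg₂ hC₂ hw hη x).1]

theorem abs_lookAheadDeriv_le {x B : ℝ} (hwη : 0 ≤ w η) (hw : w η ≤ w 0)
    (hB : ∀ s ∈ Icc 0 η, |deriv w s| ≤ B) (hη : 0 ≤ η) (hg : IntervalIntegrable g volume x (x + η)) :
    |lookAheadDeriv w η g x| ≤ w 0 * (|g (x + η)| + |g x|) + B * ∫ y in x..x + η, |g y| := by
  have hgx : IntervalIntegrable (fun s => |g (x + s)|) volume 0 η := by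
    simpa using (hg.comp_add_left x).abs
  have hconv : |∫ s in 0..η, deriv w s * g (x + s)| ≤ B * ∫ y in x..x + η, |g y| :=
    calc |∫ s in 0..η, deriv w s * g (x + s)|
        ≤ ∫ s in 0..η, B * |g (x + s)| :=
          norm_integral_le_of_norm_le hη (ae_of_all _ fun s hs => by
            rw [Real.norm_eq_abs, abs_mul]
            exact mul_le_mul_of_nonneg_right (hB s (Ioc_subset_Icc_self hs)) (abs_nonneg _))
            (hgx.const_mul B)
      _ = B * ∫ y in x..x + η, |g y| := by
          rw [intervalIntegral.integral_const_mul,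
            integral_comp_add_left (a := 0) (b := η) (fun y => |g y|) x, add_zero]
  have hright : |w η * g (x + η)| ≤ w 0 * |g (x + η)| := by
    rw [abs_mul, abs_of_nonneg hwη]
    exact mul_le_mul_of_nonneg_right hw (abs_nonneg _)
  have hleft : |w 0 * g x| = w 0 * |g x| := by rw [abs_mul, abs_of_nonneg (hwη.trans hw)]
  unfold lookAheadDeriv
  calc _ ≤ |w η * g (x + η)| + |w 0 * g x| + |∫ s in 0..η, deriv w s * g (x + s)| :=
        (abs_sub _ _).trans (add_le_add_left (abs_sub _ _) _)
    _ ≤ _ := by linarith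

end LookAhead

theorem intervalIntegral_abs_le_mul_integral_abs {h δ : ℝ → ℝ} {a b M : ℝ} (hab : a ≤ b)
    (hh : IntervalIntegrable h volume a b) (hδ : Integrable δ) (hM : 0 ≤ M)
    (hhδ : ∀ y, |h y| ≤ M * |δ y|) : ∫ y in a..b, |h y| ≤ M * ∫ y, |δ y| :=
  calc _ ≤ ∫ y in a..b, M * |δ y| :=
        integral_mono_on hab hh.abs (hδ.abs.const_mul M).intervalIntegrable fun y _ => hhδ y
    _ ≤ M * ∫ y, |δ y| := by
        rw [intervalIntegral.integral_const_mul, integral_of_le hab]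
        exact mul_le_mul_of_nonneg_left
          (setIntegral_le_integral hδ.abs (ae_of_all _ fun y => abs_nonneg _)) hM

theorem abs_le_supAbs {f : ℝ → ℝ} {s : Set ℝ} (h : BddAbove ((fun x => |f x|) '' s)) {x : ℝ}
    (hx : x ∈ s) : |f x| ≤ supAbs f s :=
  le_csSup h (mem_image_of_mem _ hx)

theorem ContinuousOn.abs_le_supAbs {f : ℝ → ℝ} {s : Set ℝ} (hf : ContinuousOn f s)
    (hs : IsCompact s) {x : ℝ} (hx : x ∈ s) : |f x| ≤ supAbs f s :=
  _root_.abs_le_supAbs (hs.bddAbove_image hf.abs) hx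

theorem ContDiffOn.abs_deriv_le_supAbs {w : ℝ → ℝ} {a b : ℝ} (hw : ContDiffOn ℝ 1 w (Icc a b))
    (hab : a < b) {x : ℝ} (hx : x ∈ Icc a b) : |deriv w x| ≤ supAbs (deriv w) (Icc a b) := by
  refine abs_le_supAbs ?_ hx
  have hsub : (fun s => |deriv w s|) '' Icc a b ⊆ insert |deriv w a| (insert |deriv w b|
      ((fun s => |derivWithin w (Icc a b) s|) '' Icc a b)) := by
    rintro _ ⟨t, ht, rfl⟩
    rcases eq_endpoints_or_mem_Ioo_of_mem_Icc ht with rfl | rfl | ht'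
    · exact mem_insert _ _
    · exact mem_insert_of_mem _ (mem_insert _ _)
    · refine mem_insert_of_mem _ (mem_insert_of_mem _ ⟨t, Ioo_subset_Icc_self ht', ?_⟩)
      simp only [derivWithin_of_mem_nhds (Icc_mem_nhds ht'.1 ht'.2)]
  exact (((isCompact_Icc.bddAbove_image
    (hw.continuousOn_derivWithin (uniqueDiffOn_Icc hab) le_rfl).abs).insert _).insert _).mono hsub

theorem abs_sub_le_mul_of_hasDerivAt {v v' : ℝ → ℝ} {a b M : ℝ}
    (hv : ∀ t ∈ Icc a b, HasDerivAt v (v' t) t) (hM : ∀ t ∈ Icc a b, |v' t| ≤ M) {p r : ℝ}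
    (hp : p ∈ Icc a b) (hr : r ∈ Icc a b) : |v r - v p| ≤ M * |r - p| :=
  (convex_Icc a b).norm_image_sub_le_of_norm_hasDerivWithin_le
    (fun t ht => (hv t ht).hasDerivWithinAt) hM hp hr

theorem ContinuousOn.locallyIntegrable_comp {f ρ : ℝ → ℝ} {s : Set ℝ} (hf : ContinuousOn f s)
    (hs : IsCompact s) (hρ : Measurable ρ) (hρs : ∀ y, ρ y ∈ s) :
    LocallyIntegrable fun y => f (ρ y) := by
  obtain ⟨C, hC⟩ := hs.exists_bound_of_continuousOn hf
  exact (locallyIntegrable_const C).mono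
    (hf.domRestrict.measurable.comp (hρ.subtype_mk (h := hρs))).aestronglyMeasurable
    (ae_of_all _ fun y => (hC _ (hρs y)).trans (le_abs_self C))

theorem convolution_derivative_difference_estimate_general
    (a b : ℝ)
    (v v' : ℝ → ℝ)
    (hv_deriv : ∀ x ∈ Set.Icc a b, HasDerivAt v (v' x) x)
    (hv'_cont : ContinuousOn v' (Set.Icc a b))
    (η : ℝ) (hη : 0 < η)
    (w : ℝ → ℝ)
    (hw_smooth : ContDiffOn ℝ 1 w (Set.Icc 0 η))
    (hw_nonneg : ∀ x ∈ Set.Icc (0:ℝ) η, 0 ≤ w x)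
    (hw_mono : AntitoneOn w (Set.Icc 0 η))
    (ρ σ : ℝ → ℝ)
    (hρ_meas : Measurable ρ) (hσ_meas : Measurable σ)
    (hρ_mem : ∀ y, ρ y ∈ Set.Icc a b) (hσ_mem : ∀ y, σ y ∈ Set.Icc a b)
    (hL1 : Integrable (fun y => ρ y - σ y))
    (V U : ℝ → ℝ)
    (hV : ∀ x, V x = ∫ y in x..(x + η), v (ρ y) * w (y - x))
    (hU : ∀ x, U x = ∫ y in x..(x + η), v (σ y) * w (y - x)) :
    ∀ᵐ x : ℝ, |deriv U x - deriv V x| ≤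
      supAbs (deriv w) (Set.Icc 0 η) * supAbs v' (Set.Icc a b) *
        (∫ y, |ρ y - σ y|)
      + w 0 * supAbs v' (Set.Icc a b) *
        (|ρ (x + η) - σ (x + η)| + |ρ x - σ x|) := by
  set M := supAbs v' (Icc a b)
  set B := supAbs (deriv w) (Icc 0 η)
  have hM (t) (ht : t ∈ Icc a b) : |v' t| ≤ M := hv'_cont.abs_le_supAbs isCompact_Icc ht
  have hB (s) (hs : s ∈ Icc 0 η) : |deriv w s| ≤ B := hw_smooth.abs_deriv_le_supAbs hη hs
  have hM0 : 0 ≤ M := (abs_nonneg _).trans (hM _ (hρ_mem 0))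
  have hB0 : 0 ≤ B := (abs_nonneg _).trans (hB 0 ⟨le_rfl, hη.le⟩)
  have hvΔ (y) : |v (σ y) - v (ρ y)| ≤ M * |ρ y - σ y| := by
    simpa only [abs_sub_comm (σ y)] using
      abs_sub_le_mul_of_hasDerivAt hv_deriv hM (hρ_mem y) (hσ_mem y)
  have hv_cont : ContinuousOn v (Icc a b) := fun t ht =>
    (hv_deriv t ht).continuousAt.continuousWithinAt
  obtain ⟨C, hC⟩ := isCompact_Icc.exists_bound_of_continuousOn hv_cont
  have hC' (y) (hy : y ∈ Icc a b) : ‖v y‖ ≤ C.toNNReal := (hC y hy).trans (Real.le_coe_toNNReal C)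
  have hvρ := hv_cont.locallyIntegrable_comp isCompact_Icc hρ_meas hρ_mem
  have hvσ := hv_cont.locallyIntegrable_comp isCompact_Icc hσ_meas hσ_mem
  have hwη : 0 ≤ w η := hw_nonneg η ⟨hη.le, le_rfl⟩
  have hw_end : w η ≤ w 0 := hw_mono ⟨le_rfl, hη.le⟩ ⟨hη.le, le_rfl⟩ hη.le
  obtain rfl : U = _ := funext hU
  obtain rfl : V = _ := funext hV
  filter_upwards [ae_deriv_sub_eq_lookAheadDeriv_sub hvσ (hC' _ <| hσ_mem ·) hvρ
    (hC' _ <| hρ_mem ·) hw_smooth hη.le] with x hx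
  have hint := intervalIntegral_abs_le_mul_integral_abs (by linarith)
    ((hvσ.sub hvρ).intervalIntegrable x (x + η)) hL1 hM0 hvΔ
  rw [hx]
  refine (abs_lookAheadDeriv_le hwη hw_end hB hη.le ((hvσ.sub hvρ).intervalIntegrable _ _)).trans ?_
  simp only [Pi.sub_apply] at hint ⊢
  nlinarith [hvΔ x, hvΔ (x + η), mul_le_mul_of_nonneg_left hint hB0]

theorem convolution_derivative_difference_estimate
    (a b : ℝ) (hab : a ≤ b)
    (v v' : ℝ → ℝ)
    (hv_deriv : ∀ x ∈ Set.Icc a b, HasDerivAt v (v' x) x)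
    (hv'_cont : ContinuousOn v' (Set.Icc a b))
    (η : ℝ) (hη : 0 < η)
    (w : ℝ → ℝ)
    (hw_smooth : ContDiffOn ℝ 1 w (Set.Icc 0 η))
    (hw_nonneg : ∀ x ∈ Set.Icc (0:ℝ) η, 0 ≤ w x)
    (hw_mono : AntitoneOn w (Set.Icc 0 η))
    (ρ σ : ℝ → ℝ)
    (hρ_meas : Measurable ρ) (hσ_meas : Measurable σ)
    (hρ_mem : ∀ y, ρ y ∈ Set.Icc a b) (hσ_mem : ∀ y, σ y ∈ Set.Icc a b)
    (hρ_BV : BoundedVariationOn ρ Set.univ) (hσ_BV : BoundedVariationOn σ Set.univ)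
    (hL1 : Integrable (fun y => ρ y - σ y))
    (V U : ℝ → ℝ)
    (hV : ∀ x, V x = ∫ y in x..(x + η), v (ρ y) * w (y - x))
    (hU : ∀ x, U x = ∫ y in x..(x + η), v (σ y) * w (y - x)) :
    ∀ᵐ x : ℝ, |deriv U x - deriv V x| ≤
      supAbs (deriv w) (Set.Icc 0 η) * supAbs v' (Set.Icc a b) *
        (∫ y, |ρ y - σ y|)
      + w 0 * supAbs v' (Set.Icc a b) *
        (|ρ (x + η) - σ (x + η)| + |ρ x - σ x|) :=
  convolution_derivative_difference_estimate_general a b v v' hv_deriv hv'_cont η hη w hw_smooth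
    hw_nonneg hw_mono ρ σ hρ_meas hσ_meas hρ_mem hσ_mem hL1 V U hV hU
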